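/- arXiv:2310.17273 — 4 statements merged into one kernel-verified Lean document; each statement's English description precedes it below -/
import Mathlib

section
/- Let f : D → ℝ on a set D, let μ, σ : D → ℝ with σ ≥ 0, let β ≥ 0, and suppose |f(x) − μ(x)| ≤ √β·σ(x) for all x ∈ D. Let x* maximize f over D and let x_bo maximize the function x ↦ μ(x) + √β·σ(x) over D. Then f(x*) − f(x_bo) ≤ 2·√β·σ(x_bo). -/
/-- Instantaneous regret bound for the UCB acquisition rule: if
`|f x − μ x| ≤ √β · σ x` everywhere, `x*` maximizes `f` and `x_bo` maximizes
`μ + √β · σ`, then `f x* − f x_bo ≤ 2 √β · σ x_bo`. -/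
theorem ucb_regret_bound {D : Type*} (f μ σ : D → ℝ) (β : ℝ)
    (hσ : ∀ x, 0 ≤ σ x) (hβ : 0 ≤ β)
    (hband : ∀ x, |f x - μ x| ≤ Real.sqrt β * σ x)
    (xstar xbo : D)
    (hstar : ∀ x, f x ≤ f xstar)
    (hbo : ∀ x, μ x + Real.sqrt β * σ x ≤ μ xbo + Real.sqrt β * σ xbo) :
    f xstar - f xbo ≤ 2 * Real.sqrt β * σ xbo := by
  have h1 := abs_le.mp (hband xstar)
  have h2 := abs_le.mp (hband xbo)
  have h3 := hbo xstar
  linarith [h1.1, h1.2, h2.1, h2.2]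
end

section
/- Let a ≥ 0, γ > 0, σ_f > 0, μ_f ∈ ℝ, and μ_π ∈ ℝ be fixed. Define σ_π²(t) = a + γt²σ_f², σ_c²(t) = σ_π²(t)σ_f²/(σ_π²(t) + σ_f²), and μ_c(t) = (σ_c²(t)/σ_π²(t))·μ_π + (σ_c²(t)/σ_f²)·μ_f. Then μ_c(t) → μ_f as t → ∞. -/
open Filter

/-- Lemma 6 (second claim) of CoExBO: the precision-weighted mean
`μ_c(t) = (σ_c²(t)/σ_π²(t)) μ_π + (σ_c²(t)/σ_f²) μ_f` of the product of
the surrogate Gaussian and the preference Gaussian converges to `μ_f`. -/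
theorem combined_mean_limit (a γ σf μf μπ : ℝ) (ha : 0 ≤ a) (hγ : 0 < γ) (hσf : 0 < σf) :
    Tendsto (fun t : ℕ =>
        let σπ2 := a + γ * (t : ℝ) ^ 2 * σf ^ 2
        let σc2 := σπ2 * σf ^ 2 / (σπ2 + σf ^ 2)
        (σc2 / σπ2) * μπ + (σc2 / σf ^ 2) * μf)
      atTop (nhds μf) := by
  have hden : Tendsto (fun t : ℕ => a + γ * (t : ℝ) ^ 2 * σf ^ 2 + σf ^ 2) atTop atTop := by
    apply tendsto_atTop_add_const_right
    apply tendsto_atTop_add_const_left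
    have h2 : Tendsto (fun t : ℕ => (t : ℝ) ^ 2) atTop atTop := by
      exact (tendsto_pow_atTop (n := 2) (by norm_num)).comp tendsto_natCast_atTop_atTop
    exact (h2.const_mul_atTop hγ).atTop_mul_const (by positivity)
  have hε : Tendsto (fun t : ℕ => σf ^ 2 / (a + γ * (t : ℝ) ^ 2 * σf ^ 2 + σf ^ 2))
      atTop (nhds 0) := tendsto_const_nhds.div_atTop hden
  have hlim : Tendsto (fun t : ℕ =>
      μf + σf ^ 2 / (a + γ * (t : ℝ) ^ 2 * σf ^ 2 + σf ^ 2) * (μπ - μf)) atTop (nhds μf) := by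
    have := tendsto_const_nhds (x := μf) (f := atTop (α := ℕ)) |>.add
      (hε.mul (tendsto_const_nhds (x := μπ - μf)))
    simpa using this
  refine hlim.congr' ?_
  filter_upwards [eventually_ge_atTop 1] with t ht
  have ht' : (1 : ℝ) ≤ (t : ℝ) := by exact_mod_cast ht
  have hs : 0 < a + γ * (t : ℝ) ^ 2 * σf ^ 2 := by
    have := mul_pos (mul_pos hγ (pow_pos (lt_of_lt_of_le one_pos ht') 2)) (pow_pos hσf 2)
    linarith
  have hsum : 0 < a + γ * (t : ℝ) ^ 2 * σf ^ 2 + σf ^ 2 := by positivity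
  simp only
  field_simp
  ring
end

section
/- Let a ≥ 0, γ > 0, σ_f > 0, μ_f, μ_π ∈ ℝ, β ≥ 0 be fixed. With σ_π²(t) = a + γt²σ_f², σ_c²(t) = σ_π²(t)σ_f²/(σ_π²(t)+σ_f²), μ_c(t) = (σ_c²(t)/σ_π²(t))μ_π + (σ_c²(t)/σ_f²)μ_f, and α(t) = μ_c(t) + √β·σ_c(t), we have α(t) → μ_f + √β·σ_f as t → ∞. -/
/-!
The preference variance `σπ²(t) = a + γ t² σf²` tends to infinity, so the product of the two
Gaussians forgets the preference model: the combined variance `σπ² σf² / (σπ² + σf²)` tends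
to `σf²`, the weight `σc² / σπ² = σf² / (σπ² + σf²)` of the preference mean tends to `0`,
and the weight `σc² / σf²` of the surrogate mean tends to `1`.
-/

open Filter Topology

/-- Variance of the (normalised) product of two Gaussian densities with variances `s₁`, `s₂`. -/
noncomputable def gaussProdVar (s₁ s₂ : ℝ) : ℝ := s₁ * s₂ / (s₁ + s₂)

section Limits

variable {α : Type*} {l : Filter α} {f : α → ℝ}

lemma gaussProdVar_eq_sub (s v : ℝ) (h : s + v ≠ 0) :
    gaussProdVar s v = v - v ^ 2 / (s + v) := by
  unfold gaussProdVar
  field_simp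
  ring

lemma tendsto_gaussProdVar_of_tendsto_atTop (hf : Tendsto f l atTop) (v : ℝ) :
    Tendsto (fun x => gaussProdVar (f x) v) l (𝓝 v) := by
  have hsum : Tendsto (fun x => f x + v) l atTop := tendsto_atTop_add_const_right _ v hf
  have hcorr : Tendsto (fun x => v - v ^ 2 / (f x + v)) l (𝓝 v) := by
    simpa using tendsto_const_nhds.sub (tendsto_const_nhds.div_atTop hsum)
  refine hcorr.congr' ?_
  filter_upwards [hsum.eventually_gt_atTop 0] with x hx
  exact (gaussProdVar_eq_sub _ _ hx.ne').symm

lemma tendsto_gaussProdVar_div_left_of_tendsto_atTop (hf : Tendsto f l atTop) (v : ℝ) :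
    Tendsto (fun x => gaussProdVar (f x) v / f x) l (𝓝 0) := by
  have hsum : Tendsto (fun x => f x + v) l atTop := tendsto_atTop_add_const_right _ v hf
  refine (tendsto_const_nhds (x := v)).div_atTop hsum |>.congr' ?_
  filter_upwards [hf.eventually_gt_atTop 0, hsum.eventually_gt_atTop 0] with x hf₀ hsum₀
  unfold gaussProdVar
  field_simp

lemma tendsto_gaussProdVar_div_right_of_tendsto_atTop (hf : Tendsto f l atTop) {v : ℝ}
    (hv : v ≠ 0) : Tendsto (fun x => gaussProdVar (f x) v / v) l (𝓝 1) := by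
  simpa [hv] using (tendsto_gaussProdVar_of_tendsto_atTop hf v).div_const v

/-- UCB acquisition `μc + √β σc` of the product of a preference model `N(μπ, f x)` and a
surrogate `N(μf, v)`, with `μc` the precision-weighted mean. -/
lemma tendsto_gaussProd_ucb_of_tendsto_atTop (hf : Tendsto f l atTop) {v : ℝ} (hv : v ≠ 0)
    (μπ μf β : ℝ) :
    Tendsto (fun x =>
        (gaussProdVar (f x) v / f x * μπ + gaussProdVar (f x) v / v * μf) +
          Real.sqrt β * Real.sqrt (gaussProdVar (f x) v))
      l (𝓝 (μf + Real.sqrt β * Real.sqrt v)) := by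
  have hmean := ((tendsto_gaussProdVar_div_left_of_tendsto_atTop hf v).mul_const μπ).add
    ((tendsto_gaussProdVar_div_right_of_tendsto_atTop hf hv).mul_const μf)
  have hstd := (tendsto_gaussProdVar_of_tendsto_atTop hf v).sqrt.const_mul (Real.sqrt β)
  simpa using hmean.add hstd

end Limits

theorem combined_acquisition_limit_general (a γ σf μf μπ β : ℝ)
    (hγ : 0 < γ) (hσf : 0 < σf) :
    Tendsto (fun t : ℕ =>
        let σπ2 := a + γ * (t : ℝ) ^ 2 * σf ^ 2
        let σc2 := σπ2 * σf ^ 2 / (σπ2 + σf ^ 2)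
        ((σc2 / σπ2) * μπ + (σc2 / σf ^ 2) * μf) + Real.sqrt β * Real.sqrt σc2)
      atTop (nhds (μf + Real.sqrt β * σf)) := by
  have hσπ2 : Tendsto (fun t : ℕ => a + γ * (t : ℝ) ^ 2 * σf ^ 2) atTop atTop := by
    refine tendsto_atTop_add_const_left _ a ?_
    simp_rw [mul_comm γ, mul_assoc]
    exact ((tendsto_pow_atTop two_ne_zero).comp tendsto_natCast_atTop_atTop).atTop_mul_const
      (by positivity)
  have h := tendsto_gaussProd_ucb_of_tendsto_atTop hσπ2 (pow_pos hσf 2).ne' μπ μf β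
  rwa [Real.sqrt_sq hσf.le] at h

/-- Lemma 6 (third claim) of CoExBO: the acquisition `α(t) = μ_c(t) + √β σ_c(t)`
built from the product-Gaussian of surrogate and preference models converges
pointwise to the standard UCB acquisition `μ_f + √β σ_f` as `t → ∞`. -/
theorem combined_acquisition_limit (a γ σf μf μπ β : ℝ)
    (ha : 0 ≤ a) (hγ : 0 < γ) (hσf : 0 < σf) (hβ : 0 ≤ β) :
    Tendsto (fun t : ℕ =>
        let σπ2 := a + γ * (t : ℝ) ^ 2 * σf ^ 2
        let σc2 := σπ2 * σf ^ 2 / (σπ2 + σf ^ 2)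
        ((σc2 / σπ2) * μπ + (σc2 / σf ^ 2) * μf) + Real.sqrt β * Real.sqrt σc2)
      atTop (nhds (μf + Real.sqrt β * σf)) :=
  combined_acquisition_limit_general a γ σf μf μπ β hγ hσf
end

section
/- Let f : D → ℝ be injective on a finite set D and define g(x, x') = 1 if f(x) > f(x'), g = 1/2 if x = x', and 0 otherwise. Then the soft-Copeland score π(x) = (1/|D|)·Σ_{x'} g(x, x') is uniquely maximized at the argmax of f. -/
/-- With noiseless pairwise comparisons determined by an injective `f` on a
finite domain, the soft-Copeland score `π x = (1/|D|) ∑_{x'} g x x'` is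
uniquely maximized at the argmax of `f`. -/
theorem soft_copeland_argmax {D : Type*} [Fintype D] (f : D → ℝ)
    (hf : Function.Injective f) (g : D → D → ℝ)
    (hdiag : ∀ x, g x x = 1 / 2)
    (hwin : ∀ x x', x ≠ x' → f x' < f x → g x x' = 1)
    (hlose : ∀ x x', x ≠ x' → f x < f x' → g x x' = 0)
    (xstar : D) (hstar : ∀ x, f x ≤ f xstar) :
    ∀ x, x ≠ xstar →
      (1 / (Fintype.card D : ℝ)) * ∑ x' : D, g x x' <
        (1 / (Fintype.card D : ℝ)) * ∑ x' : D, g xstar x' := by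
  intro x hx
  have hlt : ∀ y : D, y ≠ xstar → f y < f xstar := fun y hy =>
    lt_of_le_of_ne (hstar y) (fun h => hy (hf h))
  have hsum : ∑ x' : D, g x x' < ∑ x' : D, g xstar x' := by
    apply Finset.sum_lt_sum
    · intro y _
      by_cases hy : y = xstar
      · rw [hy, hdiag, hlose x xstar hx (hlt x hx)]
        norm_num
      · rw [hwin xstar y (fun h => hy h.symm) (hlt y hy)]
        by_cases hxy : x = y
        · subst hxy; rw [hdiag]; norm_num
        · rcases lt_or_gt_of_ne (hf.ne hxy) with h | h
          · rw [hlose x y hxy h]; norm_num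
          · rw [hwin x y hxy h]
    · exact ⟨xstar, Finset.mem_univ xstar, by
        rw [hdiag, hlose x xstar hx (hlt x hx)]; norm_num⟩
  have hc : (0 : ℝ) < 1 / (Fintype.card D : ℝ) := by
    have : 0 < Fintype.card D := Fintype.card_pos_iff.mpr ⟨xstar⟩
    positivity
  exact mul_lt_mul_of_pos_left hsum hc
end
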